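/- arXiv:2003.13039 — 2 statements merged into one kernel-verified Lean document; each statement's English description precedes it below -/
import Mathlib

section
/- For any two nondecreasing maps τ:[p]→[m] and π:[q]→[m] between finite ordinals and any shuffling of (τ,π) of length n (i.e. decompositions Im(τ)=A₁∪...∪Aₛ and Im(π)=B₁∪...∪Bₜ with A₁<...<Aₛ, B₁<...<Bₜ, s+t=n+1, interleaved as A₁≤B₁≤A₂≤... or B₁≤A₁≤B₂≤...), the cardinality of Im(τ)∩Im(π) is at most s+t−1 = n. Consequently |Im(τ)∩Im(π)| ≤ lk(τ,π), where lk(τ,π) is the minimal length of a shuffling of (τ,π). -/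
open Set

/-- `A ≤ B` as blocks: every element of `A` is at most every element of `B`. -/
def BlockLE {m : ℕ} (A B : Set (Fin m)) : Prop := ∀ a ∈ A, ∀ b ∈ B, a ≤ b

/-- `A < B` as blocks: every element of `A` is strictly below every element of `B`. -/
def BlockLT {m : ℕ} (A B : Set (Fin m)) : Prop := ∀ a ∈ A, ∀ b ∈ B, a < b

/-- A shuffling of length `n` of a pair of nondecreasing maps `τ : [p] → [m]`, `π : [q] → [m]`:
ordered decompositions `Im(τ) = A₁ ∪ ⋯ ∪ Aₛ` (`A₁ < ⋯ < Aₛ`) and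
`Im(π) = B₁ ∪ ⋯ ∪ Bₜ` (`B₁ < ⋯ < Bₜ`) into nonempty blocks with `s + t = n + 1`,
interleaved as `A₁ ≤ B₁ ≤ A₂ ≤ B₂ ≤ ⋯` or `B₁ ≤ A₁ ≤ B₂ ≤ A₂ ≤ ⋯`. -/
structure Shuffling {p q m : ℕ} (τ : Fin (p + 1) →o Fin (m + 1))
    (π : Fin (q + 1) →o Fin (m + 1)) (n : ℕ) where
  s : ℕ
  t : ℕ
  hs : 0 < s
  ht : 0 < t
  hst : s + t = n + 1
  A : Fin s → Set (Fin (m + 1))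
  B : Fin t → Set (Fin (m + 1))
  hAne : ∀ i, (A i).Nonempty
  hBne : ∀ j, (B j).Nonempty
  hAdisj : ∀ i j, i ≠ j → Disjoint (A i) (A j)
  hBdisj : ∀ i j, i ≠ j → Disjoint (B i) (B j)
  hAord : ∀ i j : Fin s, i < j → BlockLT (A i) (A j)
  hBord : ∀ i j : Fin t, i < j → BlockLT (B i) (B j)
  hAcover : (⋃ i, A i) = Set.range ⇑τ
  hBcover : (⋃ j, B j) = Set.range ⇑π
  interleave :
    (∀ (i : Fin s) (j : Fin t),
        ((i : ℕ) ≤ (j : ℕ) → BlockLE (A i) (B j)) ∧ ((j : ℕ) < (i : ℕ) → BlockLE (B j) (A i))) ∨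
    (∀ (i : Fin s) (j : Fin t),
        ((j : ℕ) ≤ (i : ℕ) → BlockLE (B j) (A i)) ∧ ((i : ℕ) < (j : ℕ) → BlockLE (A i) (B j)))

/-- The linking number: the minimal `n` for which a shuffling of length `n` exists. -/
noncomputable def linkingNumber {p q m : ℕ} (τ : Fin (p + 1) →o Fin (m + 1))
    (π : Fin (q + 1) →o Fin (m + 1)) : ℕ :=
  sInf {n | Nonempty (Shuffling τ π n)}


/-!
Every common value `x ∈ Im τ ∩ Im π` lies in some block `Aᵢ` and some block `Bⱼ`. Block indices
are monotone in `x`, and two comparable blocks meet in at most one point, so `x ↦ i + j` is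
strictly increasing on `Im τ ∩ Im π`. Its values lie in `{0, …, (s - 1) + (t - 1)} = {0, …, n - 1}`.
-/

lemma BlockLE.inter_subsingleton {m : ℕ} {A B : Set (Fin m)} (h : BlockLE A B) :
    (A ∩ B).Subsingleton := by
  rintro x ⟨hxA, hxB⟩ y ⟨hyA, hyB⟩
  exact le_antisymm (h x hxA y hyB) (h y hyA x hxB)

lemma index_le_of_blockLT {ι : Type*} [LinearOrder ι] {m : ℕ} {A : ι → Set (Fin m)}
    (hA : ∀ i j, i < j → BlockLT (A i) (A j)) {i j : ι} {x y : Fin m}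
    (hx : x ∈ A i) (hy : y ∈ A j) (hxy : x ≤ y) : i ≤ j :=
  le_of_not_gt fun hji => (hA j i hji y hy x hx).not_ge hxy

namespace Shuffling

variable {p q m n : ℕ} {τ : Fin (p + 1) →o Fin (m + 1)} {π : Fin (q + 1) →o Fin (m + 1)}

lemma inter_subsingleton (S : Shuffling τ π n) (i : Fin S.s) (j : Fin S.t) :
    (S.A i ∩ S.B j).Subsingleton := by
  rcases S.interleave with h | h
  · rcases le_or_gt (i : ℕ) j with hij | hji
    · exact ((h i j).1 hij).inter_subsingleton
    · exact Set.inter_comm (S.A i) _ ▸ ((h i j).2 hji).inter_subsingleton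
  · rcases le_or_gt (j : ℕ) i with hji | hij
    · exact Set.inter_comm (S.A i) _ ▸ ((h i j).1 hji).inter_subsingleton
    · exact ((h i j).2 hij).inter_subsingleton

lemma index_sum_lt (S : Shuffling τ π n) {x y : Fin (m + 1)} {i i' : Fin S.s} {j j' : Fin S.t}
    (hxA : x ∈ S.A i) (hxB : x ∈ S.B j) (hyA : y ∈ S.A i') (hyB : y ∈ S.B j') (hxy : x < y) :
    (i : ℕ) + j < i' + j' := by
  have hii' : i ≤ i' := index_le_of_blockLT S.hAord hxA hyA hxy.le
  have hjj' : j ≤ j' := index_le_of_blockLT S.hBord hxB hyB hxy.le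
  rcases hii'.lt_or_eq with hlt | rfl
  · exact Nat.add_lt_add_of_lt_of_le hlt hjj'
  rcases hjj'.lt_or_eq with hlt | rfl
  · exact Nat.add_lt_add_left hlt _
  exact absurd (S.inter_subsingleton i j ⟨hxA, hxB⟩ ⟨hyA, hyB⟩) hxy.ne

theorem ncard_range_inter_range_le (S : Shuffling τ π n) :
    (Set.range τ ∩ Set.range π).ncard ≤ n := by
  classical
  have hA : ∀ x ∈ Set.range τ ∩ Set.range π, ∃ i, x ∈ S.A i := fun x hx =>
    Set.mem_iUnion.mp (S.hAcover ▸ hx.1)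
  have hB : ∀ x ∈ Set.range τ ∩ Set.range π, ∃ j, x ∈ S.B j := fun x hx =>
    Set.mem_iUnion.mp (S.hBcover ▸ hx.2)
  choose I hI using hA
  choose J hJ using hB
  let f : Fin (m + 1) → ℕ := fun x =>
    if hx : x ∈ Set.range τ ∩ Set.range π then I x hx + J x hx else 0
  have hf : StrictMonoOn f (Set.range τ ∩ Set.range π) := fun x hx y hy hxy => by
    simpa only [f, dif_pos hx, dif_pos hy] using
      S.index_sum_lt (hI x hx) (hJ x hx) (hI y hy) (hJ y hy) hxy
  have hmaps : ∀ x ∈ Set.range τ ∩ Set.range π, f x ∈ (Finset.range n : Set ℕ) := by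
    intro x hx
    have := (I x hx).isLt
    have := (J x hx).isLt
    have := S.hst
    simp only [f, dif_pos hx, Finset.coe_range, Set.mem_Iio]
    omega
  simpa using Set.ncard_le_ncard_of_injOn f hmaps hf.injOn

end Shuffling

/-- For any shuffling of length `n` of `(τ, π)`, `|Im τ ∩ Im π| ≤ s + t - 1 = n`;
consequently `|Im τ ∩ Im π| ≤ lk(τ, π)`. -/
theorem stmt0 {p q m : ℕ} (τ : Fin (p + 1) →o Fin (m + 1)) (π : Fin (q + 1) →o Fin (m + 1)) :
    (∀ n : ℕ, Nonempty (Shuffling τ π n) →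
      (Set.range ⇑τ ∩ Set.range ⇑π).ncard ≤ n) ∧
    ((∃ n, Nonempty (Shuffling τ π n)) →
      (Set.range ⇑τ ∩ Set.range ⇑π).ncard ≤ linkingNumber τ π) :=
  ⟨fun _ ⟨S⟩ => S.ncard_range_inter_range_le,
    fun h => (Nat.sInf_mem h).some.ncard_range_inter_range_le⟩
end

section
/- Let E be a cosimplicial object in k-vector spaces (char k = 0) equipped with actions of the symmetric groups Sₙ on E(n) satisfying tᵢ∂ᵢ = ∂ᵢ for i=1,...,n and tₙ...t₁∂₀ = ∂_{n+1} (where tᵢ denotes the transposition (i,i+1) acting on E(n+1) for the relevant n). For the anti-symmetrization operators altₙ = (1/n!) Σ_{σ∈Sₙ} sgn(σ)σ on E(n) and the alternating sum differential ∂ = Σ_{i=0}^{n+1} (−1)^i ∂ᵢ : E(n) → E(n+1), the composite alt_{n+1} ∘ ∂ : E(n) → E(n+1) is zero. -/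
/-- Let `E` be a (two consecutive levels of a) symmetric cosimplicial vector space over a
field of characteristic zero: `V = E(n)`, `W = E(n+1)`, coface maps
`d i : V →ₗ W` (`i = 0, …, n+1`), and an action `ρ` of `S_{n+1}` on `W` satisfying
`tᵢ ∂ᵢ = ∂ᵢ` (`i = 1, …, n`) and `tₙ ⋯ t₁ ∂₀ = ∂_{n+1}`, where `tᵢ` is the transposition
`(i, i+1)`.  Then the anti-symmetrization
`alt_{n+1} = (1/(n+1)!) ∑_{σ ∈ S_{n+1}} sgn(σ) σ` annihilates the alternating-sum
differential `∂ = ∑_{i=0}^{n+1} (-1)^i ∂ᵢ : E(n) → E(n+1)`, i.e. `alt_{n+1} ∘ ∂ = 0`. -/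
theorem stmt11 (k : Type*) [Field k] [CharZero k] (n : ℕ)
    (V W : Type*) [AddCommGroup V] [Module k V] [AddCommGroup W] [Module k W]
    (d : Fin (n + 2) → V →ₗ[k] W)
    (ρ : Equiv.Perm (Fin (n + 1)) →* Module.End k W)
    (h1 : ∀ i : Fin n,
      (ρ (Equiv.swap i.castSucc i.succ)) ∘ₗ d ⟨(i : ℕ) + 1, by have := i.isLt; omega⟩ =
        d ⟨(i : ℕ) + 1, by have := i.isLt; omega⟩)
    (h2 : (ρ ((List.ofFn (fun i : Fin n => Equiv.swap i.castSucc i.succ)).reverse.prod))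
        ∘ₗ d 0 = d (Fin.last (n + 1))) :
    ((((n + 1).factorial : k)⁻¹ •
        ∑ σ : Equiv.Perm (Fin (n + 1)), (((Equiv.Perm.sign σ : ℤ) : k)) • ρ σ) :
      Module.End k W) ∘ₗ (∑ i : Fin (n + 2), ((-1 : k) ^ (i : ℕ)) • d i) = 0 := by
  set A : Module.End k W :=
    ∑ σ : Equiv.Perm (Fin (n + 1)), (((Equiv.Perm.sign σ : ℤ) : k)) • ρ σ with hA
  -- Key: A ∘ ρ τ = sgn τ • A
  have key : ∀ τ : Equiv.Perm (Fin (n + 1)),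
      A ∘ₗ (ρ τ : Module.End k W) = (((Equiv.Perm.sign τ : ℤ) : k)) • A := by
    intro τ
    have lhs : A ∘ₗ (ρ τ : Module.End k W)
        = ∑ σ : Equiv.Perm (Fin (n + 1)), (((Equiv.Perm.sign σ : ℤ) : k)) • ρ (σ * τ) := by
      ext v
      simp [hA, map_mul, Module.End.mul_apply]
    rw [lhs, hA, Finset.smul_sum,
      ← Equiv.sum_comp (Equiv.mulRight τ⁻¹)
        (fun σ : Equiv.Perm (Fin (n + 1)) => (((Equiv.Perm.sign σ : ℤ) : k)) • ρ (σ * τ))]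
    refine Finset.sum_congr rfl fun σ _ => ?_
    simp only [Equiv.coe_mulRight, inv_mul_cancel_right, smul_smul]
    congr 1
    have hsgn : Equiv.Perm.sign (σ * τ⁻¹) = Equiv.Perm.sign σ * Equiv.Perm.sign τ := by
      rw [map_mul, Equiv.Perm.sign_inv]
    rw [hsgn, Units.val_mul]
    push_cast
    ring
  -- middle faces are killed by A
  have mid : ∀ i : Fin n,
      A ∘ₗ d ⟨(i : ℕ) + 1, by have := i.isLt; omega⟩ = 0 := by
    intro i
    set D : V →ₗ[k] W := d ⟨(i : ℕ) + 1, by have := i.isLt; omega⟩ with hD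
    have e1 : A ∘ₗ D = A ∘ₗ ((ρ (Equiv.swap i.castSucc i.succ) : Module.End k W) ∘ₗ D) := by
      rw [h1 i]
    rw [← LinearMap.comp_assoc, key] at e1
    have hs : Equiv.Perm.sign (Equiv.swap i.castSucc i.succ) = -1 :=
      Equiv.Perm.sign_swap (Fin.castSucc_lt_succ : i.castSucc < i.succ).ne
    rw [hs] at e1
    simp only [Units.val_neg, Units.val_one, Int.cast_neg, Int.cast_one, neg_smul,
      one_smul, LinearMap.neg_comp] at e1
    have e2 : A ∘ₗ D = -(A ∘ₗ D) := e1
    have e3 : (2 : k) • (A ∘ₗ D) = 0 := by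
      rw [two_smul]
      nth_rewrite 2 [e2]
      exact add_neg_cancel _
    rcases smul_eq_zero.mp e3 with h | h
    · exact absurd h two_ne_zero
    · exact h
  -- the last face equals (-1)^n times the zeroth one after A
  have sgP : ((Equiv.Perm.sign
      ((List.ofFn (fun i : Fin n => Equiv.swap i.castSucc i.succ)).reverse.prod) : ℤ) : k)
      = (-1 : k) ^ n := by
    rw [MonoidHom.map_list_prod]
    rw [List.map_reverse, List.prod_reverse, List.map_ofFn]
    have : (Equiv.Perm.sign ∘ fun i : Fin n => Equiv.swap i.castSucc i.succ)
        = fun _ : Fin n => (-1 : ℤˣ) := by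
      funext i
      exact Equiv.Perm.sign_swap (Fin.castSucc_lt_succ : i.castSucc < i.succ).ne
    rw [this, List.prod_ofFn, Finset.prod_const, Finset.card_univ, Fintype.card_fin]
    simp
  have last : A ∘ₗ d (Fin.last (n + 1)) = ((-1 : k) ^ n) • (A ∘ₗ d 0) := by
    rw [← h2, ← LinearMap.comp_assoc, key, sgP, LinearMap.smul_comp]
  -- assemble
  rw [LinearMap.smul_comp]
  have main : A ∘ₗ (∑ i : Fin (n + 2), ((-1 : k) ^ (i : ℕ)) • d i) = 0 := by
    have expand : A ∘ₗ (∑ i : Fin (n + 2), ((-1 : k) ^ (i : ℕ)) • d i)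
        = ∑ i : Fin (n + 2), ((-1 : k) ^ (i : ℕ)) • (A ∘ₗ d i) := by
      ext v
      simp [LinearMap.comp_apply, LinearMap.sum_apply, LinearMap.smul_apply, map_sum]
    rw [expand, Fin.sum_univ_succ, Fin.sum_univ_castSucc]
    have hz : ∀ i : Fin n,
        ((-1 : k) ^ ((i.castSucc.succ : Fin (n+2)) : ℕ)) • (A ∘ₗ d i.castSucc.succ) = 0 := by
      intro i
      have : (i.castSucc.succ : Fin (n + 2)) = ⟨(i : ℕ) + 1, by have := i.isLt; omega⟩ := by
        ext; simp
      rw [this, mid i, smul_zero]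
    rw [Finset.sum_eq_zero fun i _ => hz i]
    have hlast : ((Fin.last n).succ : Fin (n + 2)) = Fin.last (n + 1) := by
      ext; simp
    rw [hlast, last]
    simp only [Fin.val_zero, pow_zero, one_smul, Fin.val_last, smul_smul]
    rw [← pow_add]
    have hpow : (-1 : k) ^ (n + 1 + n) = -1 := by
      have hn : n + 1 + n = 2 * n + 1 := by ring
      rw [hn, pow_succ, pow_mul]
      norm_num
    rw [hpow, neg_one_smul]
    abel
  rw [main, smul_zero]
end
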